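/- arXiv:2405.15195 — 3 statements merged into one kernel-verified Lean document; each statement's English description precedes it below -/
import Mathlib

section
/- Let ζ be a primitive 50th root of unity and k = ℚ(ζ + ζ⁻¹) with ring of integers ℤ[ζ + ζ⁻¹]. Then u₁ = ζ² + 1 + ζ⁻² and u₂ = Σ_{i=0}^{5}(ζ^{2i+1} + ζ^{-(2i+1)}) are units in the ring of integers of k. -/
open IntermediateField

/-- For ζ a primitive 50th root of unity, the elements u₁ = ζ² + 1 + ζ⁻² and
u₂ = Σ_{i=0}^{5} (ζ^{2i+1} + ζ^{-(2i+1)}) are units in the ring of integers of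
k = ℚ(ζ + ζ⁻¹): they lie in k and both they and their inverses are algebraic
integers. -/
theorem stmt_11 (ζ : ℂ) (hζ : IsPrimitiveRoot ζ 50) :
    let u₁ : ℂ := ζ ^ 2 + 1 + ζ⁻¹ ^ 2
    let u₂ : ℂ := ∑ i ∈ Finset.range 6, (ζ ^ (2 * i + 1) + ζ⁻¹ ^ (2 * i + 1))
    u₁ ∈ IntermediateField.adjoin ℚ {ζ + ζ⁻¹} ∧
    u₂ ∈ IntermediateField.adjoin ℚ {ζ + ζ⁻¹} ∧
    IsIntegral ℤ u₁ ∧ IsIntegral ℤ u₁⁻¹ ∧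
    IsIntegral ℤ u₂ ∧ IsIntegral ℤ u₂⁻¹ := by
  intro u₁ u₂
  have h0 : ζ ≠ 0 := hζ.ne_zero (by norm_num)
  have h50 : ζ ^ 50 = 1 := hζ.pow_eq_one
  have hinv : ζ⁻¹ = ζ ^ 49 := inv_eq_of_mul_eq_one_right (by rw [← pow_succ']; exact h50)
  have h2 : ζ ^ 2 ≠ 1 := hζ.pow_ne_one_of_pos_of_lt (by norm_num) (by norm_num)
  have hS : (ζ ^ 48 + ζ ^ 46 + ζ ^ 44 + ζ ^ 42 + ζ ^ 40 + ζ ^ 38 + ζ ^ 36 + ζ ^ 34 + ζ ^ 32 + ζ ^ 30 + ζ ^ 28 + ζ ^ 26 + ζ ^ 24 + ζ ^ 22 + ζ ^ 20 + ζ ^ 18 + ζ ^ 16 + ζ ^ 14 + ζ ^ 12 + ζ ^ 10 + ζ ^ 8 + ζ ^ 6 + ζ ^ 4 + ζ ^ 2 + 1 : ℂ) = 0 := by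
    have h := mul_eq_zero.mp (show (ζ ^ 2 - 1) * (ζ ^ 48 + ζ ^ 46 + ζ ^ 44 + ζ ^ 42 + ζ ^ 40 + ζ ^ 38 + ζ ^ 36 + ζ ^ 34 + ζ ^ 32 + ζ ^ 30 + ζ ^ 28 + ζ ^ 26 + ζ ^ 24 + ζ ^ 22 + ζ ^ 20 + ζ ^ 18 + ζ ^ 16 + ζ ^ 14 + ζ ^ 12 + ζ ^ 10 + ζ ^ 8 + ζ ^ 6 + ζ ^ 4 + ζ ^ 2 + 1 : ℂ) = 0 by
      linear_combination h50)
    exact h.resolve_left (sub_ne_zero.mpr h2)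
  have hζint : IsIntegral ℤ ζ := hζ.isIntegral (by norm_num)
  have hinvint : IsIntegral ℤ ζ⁻¹ := by rw [hinv]; exact hζint.pow 49
  have hx : (ζ + ζ⁻¹) ∈ adjoin ℚ {ζ + ζ⁻¹} := subset_adjoin ℚ {ζ + ζ⁻¹} rfl
  have key1 : u₁ * (ζ ^ 2 * ∑ j ∈ Finset.range 17, (ζ ^ 6) ^ j) = 1 := by
    show (ζ ^ 2 + 1 + ζ⁻¹ ^ 2) * _ = 1
    rw [hinv]
    simp only [Finset.sum_range_succ, Finset.sum_range_zero]
    linear_combination (ζ ^ 146 + ζ ^ 140 + ζ ^ 134 + ζ ^ 128 + ζ ^ 122 + ζ ^ 116 + ζ ^ 110 + ζ ^ 104 + ζ ^ 98 + ζ ^ 96 + ζ ^ 92 + ζ ^ 90 + ζ ^ 86 + ζ ^ 84 + ζ ^ 80 + ζ ^ 78 + ζ ^ 74 + ζ ^ 72 + ζ ^ 68 + ζ ^ 66 + ζ ^ 62 + ζ ^ 60 + ζ ^ 56 + ζ ^ 54 + 2 * ζ ^ 50 + 2 * ζ ^ 48 + ζ ^ 46 + ζ ^ 44 + 2 * ζ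 ^ 42 + ζ ^ 40 + ζ ^ 38 + 2 * ζ ^ 36 + ζ ^ 34 + ζ ^ 32 + 2 * ζ ^ 30 + ζ ^ 28 + ζ ^ 26 + 2 * ζ ^ 24 + ζ ^ 22 + ζ ^ 20 + 2 * ζ ^ 18 + ζ ^ 16 + ζ ^ 14 + 2 * ζ ^ 12 + ζ ^ 10 + ζ ^ 8 + 2 * ζ ^ 6 + ζ ^ 4 + ζ ^ 2 + 3) * h50 + 2 * hS
  have key2 : u₂ * (ζ ^ 11 * ∑ j ∈ Finset.range 23, (ζ ^ 24) ^ j) = 1 := by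
    show (∑ i ∈ Finset.range 6, (ζ ^ (2 * i + 1) + ζ⁻¹ ^ (2 * i + 1))) * _ = 1
    rw [hinv]
    simp only [Finset.sum_range_succ, Finset.sum_range_zero]
    norm_num
    linear_combination (ζ ^ 1028 + ζ ^ 1004 + ζ ^ 980 + ζ ^ 978 + ζ ^ 956 + ζ ^ 954 + ζ ^ 932 + 2 * ζ ^ 930 + ζ ^ 928 + ζ ^ 908 + 2 * ζ ^ 906 + ζ ^ 904 + ζ ^ 884 + 2 * ζ ^ 882 + 2 * ζ ^ 880 + ζ ^ 878 + ζ ^ 860 + 2 * ζ ^ 858 + 2 * ζ ^ 856 + ζ ^ 854 + ζ ^ 836 + 2 * ζ ^ 834 + 3 * ζ ^ 832 + 2 * ζ ^ 830 + ζ ^ 828 + ζ ^ 812 + 2 * ζ ^ 810 + 3 * ζ ^ 808 + 2 * ζ ^ 806 + ζ ^ 804 + ζ ^ 788 + 2 * ζ ^ 786 + 3 * ζ ^ 784 + 3 * ζ ^ 782 + 2 * ζ ^ 780 + ζ ^ 778 + ζ ^ 764 + 2 * ζ ^ 762 + 3 * ζ ^ 760 + 3 * ζ ^ 758 + 2 *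 ζ ^ 756 + ζ ^ 754 + ζ ^ 740 + 2 * ζ ^ 738 + 3 * ζ ^ 736 + 4 * ζ ^ 734 + 3 * ζ ^ 732 + 2 * ζ ^ 730 + ζ ^ 728 + ζ ^ 716 + 2 * ζ ^ 714 + 3 * ζ ^ 712 + 4 * ζ ^ 710 + 3 * ζ ^ 708 + 2 * ζ ^ 706 + ζ ^ 704 + ζ ^ 692 + 2 * ζ ^ 690 + 3 * ζ ^ 688 + 4 * ζ ^ 686 + 4 * ζ ^ 684 + 3 * ζ ^ 682 + 2 * ζ ^ 680 + ζ ^ 678 + ζ ^ 668 + 2 * ζ ^ 666 + 3 * ζ ^ 664 + 4 * ζ ^ 662 + 4 * ζ ^ 660 + 3 * ζ ^ 658 + 2 * ζ ^ 656 + ζ ^ 654 + ζ ^ 644 + 2 * ζ ^ 642 + 3 * ζ ^ 640 + 4 * ζ ^ 638 + 5 * ζ ^ 636 + 4 * ζ ^ 634 + 3 * ζ ^ 632 + 2 * ζ ^ 630 + ζ ^ 628 + ζ ^ 620 + 2 * ζ ^ 618 + 3 * ζ ^ 616 + 4 * ζ ^ 614 + 5 * ζ ^ 612 + 4 * ζ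 ^ 610 + 3 * ζ ^ 608 + 2 * ζ ^ 606 + ζ ^ 604 + ζ ^ 596 + 2 * ζ ^ 594 + 3 * ζ ^ 592 + 4 * ζ ^ 590 + 5 * ζ ^ 588 + 5 * ζ ^ 586 + 4 * ζ ^ 584 + 3 * ζ ^ 582 + 2 * ζ ^ 580 + ζ ^ 578 + ζ ^ 572 + 2 * ζ ^ 570 + 3 * ζ ^ 568 + 4 * ζ ^ 566 + 5 * ζ ^ 564 + 5 * ζ ^ 562 + 4 * ζ ^ 560 + 3 * ζ ^ 558 + 2 * ζ ^ 556 + ζ ^ 554 + ζ ^ 548 + 2 * ζ ^ 546 + 3 * ζ ^ 544 + 4 * ζ ^ 542 + 5 * ζ ^ 540 + 6 * ζ ^ 538 + 5 * ζ ^ 536 + 4 * ζ ^ 534 + 3 * ζ ^ 532 + 2 * ζ ^ 530 + ζ ^ 528 + ζ ^ 524 + 2 * ζ ^ 522 + 3 * ζ ^ 520 + 4 * ζ ^ 518 + 5 * ζ ^ 516 + 6 * ζ ^ 514 + 5 * ζ ^ 512 + 4 * ζ ^ 510 + 3 * ζ ^ 508 + 2 * ζ ^ 506 + ζ ^ 504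 + 2 * ζ ^ 500 + 3 * ζ ^ 498 + 4 * ζ ^ 496 + 5 * ζ ^ 494 + 6 * ζ ^ 492 + 7 * ζ ^ 490 + 6 * ζ ^ 488 + 5 * ζ ^ 486 + 4 * ζ ^ 484 + 3 * ζ ^ 482 + 2 * ζ ^ 480 + ζ ^ 478 + ζ ^ 476 + 3 * ζ ^ 474 + 4 * ζ ^ 472 + 5 * ζ ^ 470 + 6 * ζ ^ 468 + 7 * ζ ^ 466 + 6 * ζ ^ 464 + 5 * ζ ^ 462 + 4 * ζ ^ 460 + 3 * ζ ^ 458 + 2 * ζ ^ 456 + ζ ^ 454 + ζ ^ 452 + 4 * ζ ^ 450 + 5 * ζ ^ 448 + 6 * ζ ^ 446 + 7 * ζ ^ 444 + 8 * ζ ^ 442 + 7 * ζ ^ 440 + 6 * ζ ^ 438 + 5 * ζ ^ 436 + 4 * ζ ^ 434 + 3 * ζ ^ 432 + 2 * ζ ^ 430 + 2 * ζ ^ 428 + 3 * ζ ^ 426 + 5 * ζ ^ 424 + 6 * ζ ^ 422 + 7 * ζ ^ 420 + 8 * ζ ^ 418 + 7 * ζ ^ 416 + 6 * ζ ^ 414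 + 5 * ζ ^ 412 + 4 * ζ ^ 410 + 3 * ζ ^ 408 + 2 * ζ ^ 406 + 2 * ζ ^ 404 + 3 * ζ ^ 402 + 6 * ζ ^ 400 + 7 * ζ ^ 398 + 8 * ζ ^ 396 + 9 * ζ ^ 394 + 8 * ζ ^ 392 + 7 * ζ ^ 390 + 6 * ζ ^ 388 + 5 * ζ ^ 386 + 4 * ζ ^ 384 + 3 * ζ ^ 382 + 3 * ζ ^ 380 + 3 * ζ ^ 378 + 5 * ζ ^ 376 + 7 * ζ ^ 374 + 8 * ζ ^ 372 + 9 * ζ ^ 370 + 8 * ζ ^ 368 + 7 * ζ ^ 366 + 6 * ζ ^ 364 + 5 * ζ ^ 362 + 4 * ζ ^ 360 + 3 * ζ ^ 358 + 3 * ζ ^ 356 + 3 * ζ ^ 354 + 5 * ζ ^ 352 + 8 * ζ ^ 350 + 9 * ζ ^ 348 + 10 * ζ ^ 346 + 9 * ζ ^ 344 + 8 * ζ ^ 342 + 7 * ζ ^ 340 + 6 * ζ ^ 338 + 5 * ζ ^ 336 + 4 * ζ ^ 334 + 4 * ζ ^ 332 + 4 * ζ ^ 330 + 5 * ζ ^ 328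 + 7 * ζ ^ 326 + 9 * ζ ^ 324 + 10 * ζ ^ 322 + 9 * ζ ^ 320 + 8 * ζ ^ 318 + 7 * ζ ^ 316 + 6 * ζ ^ 314 + 5 * ζ ^ 312 + 4 * ζ ^ 310 + 4 * ζ ^ 308 + 4 * ζ ^ 306 + 5 * ζ ^ 304 + 7 * ζ ^ 302 + 10 * ζ ^ 300 + 11 * ζ ^ 298 + 10 * ζ ^ 296 + 9 * ζ ^ 294 + 8 * ζ ^ 292 + 7 * ζ ^ 290 + 6 * ζ ^ 288 + 5 * ζ ^ 286 + 5 * ζ ^ 284 + 5 * ζ ^ 282 + 5 * ζ ^ 280 + 7 * ζ ^ 278 + 9 * ζ ^ 276 + 11 * ζ ^ 274 + 10 * ζ ^ 272 + 9 * ζ ^ 270 + 8 * ζ ^ 268 + 7 * ζ ^ 266 + 6 * ζ ^ 264 + 5 * ζ ^ 262 + 5 * ζ ^ 260 + 5 * ζ ^ 258 + 5 * ζ ^ 256 + 7 * ζ ^ 254 + 9 * ζ ^ 252 + 12 * ζ ^ 250 + 11 * ζ ^ 248 + 10 * ζ ^ 246 + 9 * ζ ^ 244 + 8 * ζ ^ 242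 + 7 * ζ ^ 240 + 6 * ζ ^ 238 + 6 * ζ ^ 236 + 6 * ζ ^ 234 + 6 * ζ ^ 232 + 7 * ζ ^ 230 + 9 * ζ ^ 228 + 11 * ζ ^ 226 + 11 * ζ ^ 224 + 10 * ζ ^ 222 + 9 * ζ ^ 220 + 8 * ζ ^ 218 + 7 * ζ ^ 216 + 6 * ζ ^ 214 + 6 * ζ ^ 212 + 6 * ζ ^ 210 + 6 * ζ ^ 208 + 7 * ζ ^ 206 + 9 * ζ ^ 204 + 11 * ζ ^ 202 + 12 * ζ ^ 200 + 11 * ζ ^ 198 + 10 * ζ ^ 196 + 9 * ζ ^ 194 + 8 * ζ ^ 192 + 7 * ζ ^ 190 + 7 * ζ ^ 188 + 7 * ζ ^ 186 + 7 * ζ ^ 184 + 7 * ζ ^ 182 + 9 * ζ ^ 180 + 11 * ζ ^ 178 + 11 * ζ ^ 176 + 11 * ζ ^ 174 + 10 * ζ ^ 172 + 9 * ζ ^ 170 + 8 * ζ ^ 168 + 7 * ζ ^ 166 + 7 * ζ ^ 164 + 7 * ζ ^ 162 + 7 * ζ ^ 160 + 7 * ζ ^ 158 + 9 * ζ ^ 156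 + 11 * ζ ^ 154 + 11 * ζ ^ 152 + 12 * ζ ^ 150 + 11 * ζ ^ 148 + 10 * ζ ^ 146 + 9 * ζ ^ 144 + 8 * ζ ^ 142 + 8 * ζ ^ 140 + 8 * ζ ^ 138 + 8 * ζ ^ 136 + 8 * ζ ^ 134 + 9 * ζ ^ 132 + 11 * ζ ^ 130 + 11 * ζ ^ 128 + 11 * ζ ^ 126 + 11 * ζ ^ 124 + 10 * ζ ^ 122 + 9 * ζ ^ 120 + 8 * ζ ^ 118 + 8 * ζ ^ 116 + 8 * ζ ^ 114 + 8 * ζ ^ 112 + 8 * ζ ^ 110 + 9 * ζ ^ 108 + 11 * ζ ^ 106 + 11 * ζ ^ 104 + 11 * ζ ^ 102 + 12 * ζ ^ 100 + 11 * ζ ^ 98 + 10 * ζ ^ 96 + 9 * ζ ^ 94 + 9 * ζ ^ 92 + 9 * ζ ^ 90 + 9 * ζ ^ 88 + 9 * ζ ^ 86 + 9 * ζ ^ 84 + 11 * ζ ^ 82 + 11 * ζ ^ 80 + 11 * ζ ^ 78 + 11 * ζ ^ 76 + 11 * ζ ^ 74 + 10 * ζ ^ 72 + 9 * ζ ^ 70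 + 9 * ζ ^ 68 + 9 * ζ ^ 66 + 9 * ζ ^ 64 + 9 * ζ ^ 62 + 9 * ζ ^ 60 + 11 * ζ ^ 58 + 11 * ζ ^ 56 + 11 * ζ ^ 54 + 11 * ζ ^ 52 + 12 * ζ ^ 50 + 11 * ζ ^ 48 + 10 * ζ ^ 46 + 10 * ζ ^ 44 + 10 * ζ ^ 42 + 10 * ζ ^ 40 + 10 * ζ ^ 38 + 10 * ζ ^ 36 + 11 * ζ ^ 34 + 11 * ζ ^ 32 + 11 * ζ ^ 30 + 11 * ζ ^ 28 + 11 * ζ ^ 26 + 11 * ζ ^ 24 + 10 * ζ ^ 22 + 10 * ζ ^ 20 + 10 * ζ ^ 18 + 10 * ζ ^ 16 + 10 * ζ ^ 14 + 10 * ζ ^ 12 + 11 * ζ ^ 10 + 11 * ζ ^ 8 + 11 * ζ ^ 6 + 11 * ζ ^ 4 + 11 * ζ ^ 2 + 12) * h50 + 11 * hS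
  refine ⟨?_, ?_, ?_, ?_, ?_, ?_⟩
  · have hm1 : u₁ = (ζ + ζ⁻¹) ^ 2 - 1 := by
      show ζ ^ 2 + 1 + ζ⁻¹ ^ 2 = _
      field_simp
      ring
    rw [hm1]
    exact sub_mem (pow_mem hx 2) (one_mem _)
  · have hm2 : u₂ = (ζ + ζ⁻¹) ^ 11 - 10 * (ζ + ζ⁻¹) ^ 9 + 36 * (ζ + ζ⁻¹) ^ 7
        - 56 * (ζ + ζ⁻¹) ^ 5 + 35 * (ζ + ζ⁻¹) ^ 3 - 6 * (ζ + ζ⁻¹) := by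
      show (∑ i ∈ Finset.range 6, (ζ ^ (2 * i + 1) + ζ⁻¹ ^ (2 * i + 1))) = _
      simp only [Finset.sum_range_succ, Finset.sum_range_zero]
      rw [hinv]
      linear_combination ((-11) * ζ ^ 441 + (-55) * ζ ^ 393 + (-165) * ζ ^ 345 + (35) * ζ ^ 343 + (-330) * ζ ^ 297 + (195) * ζ ^ 295 + (-462) * ζ ^ 249 + (510) * ζ ^ 247 + (-57) * ζ ^ 245 + (-462) * ζ ^ 201 + (798) * ζ ^ 199 + (-246) * ζ ^ 197 + (-330) * ζ ^ 153 + (798) * ζ ^ 151 + (-462) * ζ ^ 149 + (34) * ζ ^ 147 + (-165) * ζ ^ 105 + (510) * ζ ^ 103 + (-462) * ζ ^ 101 + (98) * ζ ^ 99 + (-55) * ζ ^ 57 + (195) * ζ ^ 55 + (-246) * ζ ^ 53 + (98) * ζ ^ 51 + (-7) * ζ ^ 49 + (-11) * ζ ^ 9 + (35) * ζ ^ 7 + (-57) * ζ ^ 5 + (34) * ζ ^ 3 + (-7) * ζ ^ 1) * h50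
    rw [hm2]
    have hn : ∀ n : ℕ, ((n : ℂ)) ∈ adjoin ℚ {ζ + ζ⁻¹} := fun n => by
      exact_mod_cast IntermediateField.natCast_mem (adjoin ℚ {ζ + ζ⁻¹}) n
    refine sub_mem (add_mem (sub_mem (add_mem (sub_mem (pow_mem hx 11) ?_) ?_) ?_) ?_) ?_
    · exact mul_mem (by exact_mod_cast hn 10) (pow_mem hx 9)
    · exact mul_mem (by exact_mod_cast hn 36) (pow_mem hx 7)
    · exact mul_mem (by exact_mod_cast hn 56) (pow_mem hx 5)
    · exact mul_mem (by exact_mod_cast hn 35) (pow_mem hx 3)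
    · exact mul_mem (by exact_mod_cast hn 6) hx
  · exact ((hζint.pow 2).add isIntegral_one).add (hinvint.pow 2)
  · rw [inv_eq_of_mul_eq_one_right key1]
    exact (hζint.pow 2).mul (IsIntegral.sum _ fun j _ => (hζint.pow 6).pow j)
  · exact IsIntegral.sum _ fun i _ => (hζint.pow _).add (hinvint.pow _)
  · rw [inv_eq_of_mul_eq_one_right key2]
    exact (hζint.pow 11).mul (IsIntegral.sum _ fun j _ => (hζint.pow 24).pow j)
end

section
/- Let ζ be a primitive 50th root of unity and k = ℚ(ζ + ζ⁻¹). Then a' = (ζ + ζ⁻¹ − 3)/(ζ + ζ⁻¹ + 2) is an algebraic integer (lies in the ring of integers of k), and its norm N_{k/ℚ}(a') equals 3001. -/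
open IntermediateField

open Polynomial Module in
/-- The minimal polynomial of `a' = (ζ + ζ⁻¹ - 3)/(ζ + ζ⁻¹ + 2)` over `ℚ`. -/
noncomputable def QP12 : ℚ[X] :=
  X ^ 10 + C 115 * X ^ 9 + C 3295 * X ^ 8 + C 36255 * X ^ 7 + C 181585 * X ^ 6 +
    C 452998 * X ^ 5 + C 606335 * X ^ 4 + C 449755 * X ^ 3 + C 182420 * X ^ 2 +
    C 37365 * X + C 3001

open Polynomial in
/-- Integer version of `QP12`. -/
noncomputable def ZP12 : ℤ[X] :=
  X ^ 10 + C 115 * X ^ 9 + C 3295 * X ^ 8 + C 36255 * X ^ 7 + C 181585 * X ^ 6 +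
    C 452998 * X ^ 5 + C 606335 * X ^ 4 + C 449755 * X ^ 3 + C 182420 * X ^ 2 +
    C 37365 * X + C 3001

set_option maxHeartbeats 1000000 in
/-- The key algebraic identity: if `t * (ζ+1)^2 = ζ^2 - 3ζ + 1` and
`Φ₅₀(ζ) = 0` then `t` is a root of the degree-10 integer polynomial. -/
lemma aux12 (ζ t : ℂ) (key : ζ ^ 20 - ζ ^ 15 + ζ ^ 10 - ζ ^ 5 + 1 = 0)
    (hd : ((ζ:ℂ) + 1) ^ 2 ≠ 0)
    (ht : t * ((ζ + 1) ^ 2) = ζ ^ 2 - 3 * ζ + 1) :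
    t ^ 10 + 115 * t ^ 9 + 3295 * t ^ 8 + 36255 * t ^ 7 + 181585 * t ^ 6 +
      452998 * t ^ 5 + 606335 * t ^ 4 + 449755 * t ^ 3 + 182420 * t ^ 2 +
      37365 * t + 3001 = 0 := by
  have H : (t ^ 10 + 115 * t ^ 9 + 3295 * t ^ 8 + 36255 * t ^ 7 + 181585 * t ^ 6 +
      452998 * t ^ 5 + 606335 * t ^ 4 + 449755 * t ^ 3 + 182420 * t ^ 2 +
      37365 * t + 3001) * ((ζ + 1) ^ 2) ^ 10 = 0 := by
    linear_combination (1953125 : ℂ) * key + (t ^ 9 * ((1) * ζ ^ 18 + (18) * ζ ^ 17 + (153) * ζ ^ 16 + (816) * ζ ^ 15 + (3060) * ζ ^ 14 + (8568) * ζ ^ 13 + (18564) * ζ ^ 12 + (31824) * ζ ^ 11 + (43758) * ζ ^ 10 + (48620) * ζ ^ 9 + (43758) * ζ ^ 8 + (31824) * ζ ^ 7 + (18564) * ζ ^ 6 + (8568) * ζ ^ 5 + (3060) * ζ ^ 4 + (816) * ζ ^ 3 + (153) * ζ ^ 2 + (18) * ζ + (1)) +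
      t ^ 8 * ((116) * ζ ^ 18 + (2083) * ζ ^ 17 + (17668) * ζ ^ 16 + (94056) * ζ ^ 15 + (352160) * ζ ^ 14 + (984788) * ζ ^ 13 + (2131584) * ζ ^ 12 + (3651544) * ζ ^ 11 + (5018728) * ζ ^ 10 + (5575570) * ζ ^ 9 + (5018728) * ζ ^ 8 + (3651544) * ζ ^ 7 + (2131584) * ζ ^ 6 + (984788) * ζ ^ 5 + (352160) * ζ ^ 4 + (94056) * ζ ^ 3 + (17668) * ζ ^ 2 + (2083) * ζ + (116)) +
      t ^ 7 * ((3411) * ζ ^ 18 + (60813) * ζ ^ 17 + (512548) * ζ ^ 16 + (2713526) * ζ ^ 15 + (10112335) * ζ ^ 14 + (28169848) * ζ ^ 13 + (60791549) * ζ ^ 12 + (103917034) * ζ ^ 11 + (142641213) * ζ ^ 10 + (158399670) * ζ ^ 9 + (142641213) * ζ ^ 8 + (103917034) * ζ ^ 7 + (60791549) * ζ ^ 6 + (28169848) * ζ ^ 5 + (10112335) * ζ ^ 4 + (2713526) * ζ ^ 3 + (512548) * ζ ^ 2 + (60813) * ζ + (3411)) +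
      t ^ 6 * ((39666) * ζ ^ 18 + (696348) * ζ ^ 17 + (5789608) * ζ ^ 16 + (30291831) * ζ ^ 15 + (111766510) * ζ ^ 14 + (308819038) * ζ ^ 13 + (662233554) * ζ ^ 12 + (1126913689) * ζ ^ 11 + (1542663078) * ζ ^ 10 + (1711543020) * ζ ^ 9 + (1542663078) * ζ ^ 8 + (1126913689) * ζ ^ 7 + (662233554) * ζ ^ 6 + (308819038) * ζ ^ 5 + (111766510) * ζ ^ 4 + (30291831) * ζ ^ 3 + (5789608) * ζ ^ 2 + (696348) * ζ + (39666)) +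
      t ^ 5 * ((221251) * ζ ^ 18 + (3766548) * ζ ^ 17 + (30487033) * ζ ^ 16 + (155885641) * ζ ^ 15 + (564201635) * ζ ^ 14 + (1534816268) * ζ ^ 13 + (3251943379) * ζ ^ 12 + (5486798239) * ζ ^ 11 + (7472878158) * ζ ^ 10 + (8276929520) * ζ ^ 9 + (7472878158) * ζ ^ 8 + (5486798239) * ζ ^ 7 + (3251943379) * ζ ^ 6 + (1534816268) * ζ ^ 5 + (564201635) * ζ ^ 4 + (155885641) * ζ ^ 3 + (30487033) * ζ ^ 2 + (3766548) * ζ + (221251)) +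
      t ^ 4 * ((674249) * ζ ^ 18 + (10814257) * ζ ^ 17 + (83175497) * ζ ^ 16 + (407443559) * ζ ^ 15 + (1423744440) * ζ ^ 14 + (3766445557) * ζ ^ 13 + (7813263136) * ζ ^ 12 + (12989217501) * ζ ^ 11 + (17536886742) * ζ ^ 10 + (19367646380) * ζ ^ 9 + (17536886742) * ζ ^ 8 + (12989217501) * ζ ^ 7 + (7813263136) * ζ ^ 6 + (3766445557) * ζ ^ 5 + (1423744440) * ζ ^ 4 + (407443559) * ζ ^ 3 + (83175497) * ζ ^ 2 + (10814257) * ζ + (674249)) +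
      t ^ 3 * ((1280584) * ζ ^ 18 + (18357042) * ζ ^ 17 + (128615957) * ζ ^ 16 + (584364269) * ζ ^ 15 + (1924937840) * ζ ^ 14 + (4869033687) * ζ ^ 13 + (9776210291) * ζ ^ 12 + (15897508581) * ζ ^ 11 + (21191289872) * ζ ^ 10 + (23306141930) * ζ ^ 9 + (21191289872) * ζ ^ 8 + (15897508581) * ζ ^ 7 + (9776210291) * ζ ^ 6 + (4869033687) * ζ ^ 5 + (1924937840) * ζ ^ 4 + (584364269) * ζ ^ 3 + (128615957) * ζ ^ 2 + (18357042) * ζ + (1280584)) +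
      t ^ 2 * ((1730339) * ζ ^ 18 + (20049712) * ζ ^ 17 + (118449102) * ζ ^ 16 + (472646224) * ζ ^ 15 + (1415782415) * ζ ^ 14 + (3347374902) * ζ ^ 13 + (6416018651) * ζ ^ 12 + (10123506791) * ζ ^ 11 + (13267579537) * ζ ^ 10 + (14511964830) * ζ ^ 9 + (13267579537) * ζ ^ 8 + (10123506791) * ζ ^ 7 + (6416018651) * ζ ^ 6 + (3347374902) * ζ ^ 5 + (1415782415) * ζ ^ 4 + (472646224) * ζ ^ 3 + (118449102) * ζ ^ 2 + (20049712) * ζ + (1730339)) +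
      t * ((1912759) * ζ ^ 18 + (14681577) * ζ ^ 17 + (63414192) * ζ ^ 16 + (203797469) * ζ ^ 15 + (529108615) * ζ ^ 14 + (1138898862) * ζ ^ 13 + (2053369221) * ζ ^ 12 + (3118386836) * ζ ^ 11 + (4002382322) * ζ ^ 10 + (4348844730) * ζ ^ 9 + (4002382322) * ζ ^ 8 + (3118386836) * ζ ^ 7 + (2053369221) * ζ ^ 6 + (1138898862) * ζ ^ 5 + (529108615) * ζ ^ 4 + (203797469) * ζ ^ 3 + (63414192) * ζ ^ 2 + (14681577) * ζ + (1912759)) +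
      ((1950124) * ζ ^ 18 + (5790352) * ζ ^ 17 + (14850742) * ζ ^ 16 + (35340734) * ζ ^ 15 + (76631615) * ζ ^ 14 + (146073482) * ζ ^ 13 + (245270071) * ζ ^ 12 + (357099211) * ζ ^ 11 + (447991592) * ζ ^ 10 + (482827605) * ζ ^ 9 + (447991592) * ζ ^ 8 + (357099211) * ζ ^ 7 + (245270071) * ζ ^ 6 + (146073482) * ζ ^ 5 + (76631615) * ζ ^ 4 + (35340734) * ζ ^ 3 + (14850742) * ζ ^ 2 + (5790352) * ζ + (1950124))) * ht
  exact (mul_eq_zero.mp H).resolve_right (pow_ne_zero 10 hd)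

set_option maxHeartbeats 2000000 in
set_option synthInstance.maxHeartbeats 400000 in
/-- For ζ a primitive 50th root of unity and k = ℚ(ζ + ζ⁻¹), the element
a' = (ζ + ζ⁻¹ − 3)/(ζ + ζ⁻¹ + 2) is an algebraic integer lying in k,
and its norm N_{k/ℚ}(a') equals 3001. -/
theorem stmt_12 (ζ : ℂ) (hζ : IsPrimitiveRoot ζ 50)
    (ha : (ζ + ζ⁻¹ - 3) / (ζ + ζ⁻¹ + 2) ∈ IntermediateField.adjoin ℚ {ζ + ζ⁻¹}) :
    IsIntegral ℤ ((ζ + ζ⁻¹ - 3) / (ζ + ζ⁻¹ + 2)) ∧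
    Algebra.norm ℚ
      (⟨(ζ + ζ⁻¹ - 3) / (ζ + ζ⁻¹ + 2), ha⟩ :
        IntermediateField.adjoin ℚ {ζ + ζ⁻¹}) = 3001 := by
  open Polynomial Module in
  have h50 : ζ ^ 50 = 1 := hζ.pow_eq_one
  have hζ0 : ζ ≠ 0 := hζ.ne_zero (by norm_num)
  have hinv : ζ * ζ⁻¹ = 1 := mul_inv_cancel₀ hζ0
  have h25 : ζ ^ 25 = -1 := by
    have h : (ζ ^ 25 - 1) * (ζ ^ 25 + 1) = 0 := by linear_combination h50
    rcases mul_eq_zero.mp h with h | h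
    · exact absurd (by linear_combination h)
        (hζ.pow_ne_one_of_pos_of_lt (by norm_num) (by norm_num : (25:ℕ) < 50))
    · linear_combination h
  have h5 : ζ ^ 5 + 1 ≠ 0 := by
    intro h
    exact hζ.pow_ne_one_of_pos_of_lt (by norm_num) (by norm_num : (10:ℕ) < 50)
      (by linear_combination (ζ ^ 5 - 1) * h)
  have key : ζ ^ 20 - ζ ^ 15 + ζ ^ 10 - ζ ^ 5 + 1 = 0 := by
    have h : (ζ ^ 5 + 1) * (ζ ^ 20 - ζ ^ 15 + ζ ^ 10 - ζ ^ 5 + 1) = 0 := by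
      linear_combination h25
    exact (mul_eq_zero.mp h).resolve_left h5
  have hζ1 : ζ + 1 ≠ 0 := by
    intro h
    exact hζ.pow_ne_one_of_pos_of_lt (by norm_num) (by norm_num : (2:ℕ) < 50)
      (by linear_combination (ζ - 1) * h)
  have hd : ((ζ:ℂ) + 1) ^ 2 ≠ 0 := pow_ne_zero 2 hζ1
  have hden : ζ + ζ⁻¹ + 2 ≠ 0 := by
    intro h
    have h2 : (ζ + 1) ^ 2 = 0 := by linear_combination ζ * h - hinv
    exact hζ1 (pow_eq_zero_iff (two_ne_zero) |>.mp h2)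
  set x := (ζ + ζ⁻¹ - 3) / (ζ + ζ⁻¹ + 2) with hxdef
  have hx : x = (ζ ^ 2 - 3 * ζ + 1) / (ζ + 1) ^ 2 := by
    rw [hxdef, div_eq_div_iff hden hd]
    field_simp
    ring
  have hroot : ((ζ ^ 2 - 3 * ζ + 1) / (ζ + 1) ^ 2) ^ 10 +
      115 * ((ζ ^ 2 - 3 * ζ + 1) / (ζ + 1) ^ 2) ^ 9 +
      3295 * ((ζ ^ 2 - 3 * ζ + 1) / (ζ + 1) ^ 2) ^ 8 +
      36255 * ((ζ ^ 2 - 3 * ζ + 1) / (ζ + 1) ^ 2) ^ 7 +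
      181585 * ((ζ ^ 2 - 3 * ζ + 1) / (ζ + 1) ^ 2) ^ 6 +
      452998 * ((ζ ^ 2 - 3 * ζ + 1) / (ζ + 1) ^ 2) ^ 5 +
      606335 * ((ζ ^ 2 - 3 * ζ + 1) / (ζ + 1) ^ 2) ^ 4 +
      449755 * ((ζ ^ 2 - 3 * ζ + 1) / (ζ + 1) ^ 2) ^ 3 +
      182420 * ((ζ ^ 2 - 3 * ζ + 1) / (ζ + 1) ^ 2) ^ 2 +
      37365 * ((ζ ^ 2 - 3 * ζ + 1) / (ζ + 1) ^ 2) + 3001 = 0 :=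
    aux12 ζ _ key hd (div_mul_cancel₀ _ hd)
  have haev : aeval x QP12 = 0 := by
    simp only [QP12, map_add, map_mul, map_pow, aeval_X, aeval_C, map_ofNat]
    rw [hx]
    linear_combination hroot
  have hQmonic : QP12.Monic := by unfold QP12; monicity!
  have hQdeg : QP12.natDegree = 10 := by unfold QP12; compute_degree!
  have hxint : IsIntegral ℚ x := ⟨QP12, hQmonic, haev⟩
  set K := IntermediateField.adjoin ℚ {ζ + ζ⁻¹} with hK
  -- `K = ℚ(x)`
  have h1x : (1:ℂ) - x ≠ 0 := by
    rw [hxdef]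
    intro h
    rw [sub_eq_zero, eq_comm, div_eq_one_iff_eq hden] at h
    have h5' : (5:ℂ) = 0 := by linear_combination - h
    norm_num at h5'
  have hgen : ζ + ζ⁻¹ = (3 + 2 * x) * (1 - x)⁻¹ := by
    rw [eq_mul_inv_iff_mul_eq₀ h1x]
    have hs : x * (ζ + ζ⁻¹ + 2) = ζ + ζ⁻¹ - 3 := by
      rw [hxdef]; exact div_mul_cancel₀ _ hden
    have H : ((ζ + ζ⁻¹) * (1 - x) - (3 + 2 * x)) * (ζ + ζ⁻¹ + 2) = 0 := by
      linear_combination (-(ζ + ζ⁻¹ + 2)) * hs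
    have hz := (mul_eq_zero.mp H).resolve_right hden
    linear_combination hz
  have hKeq : K = ℚ⟮x⟯ := by
    apply le_antisymm
    · rw [hK, adjoin_le_iff, Set.singleton_subset_iff]
      have hxm : x ∈ ℚ⟮x⟯ := mem_adjoin_simple_self ℚ x
      have h3 : (3:ℂ) ∈ ℚ⟮x⟯ := by
        simpa using IntermediateField.algebraMap_mem ℚ⟮x⟯ (3:ℚ)
      have h2 : (2:ℂ) ∈ ℚ⟮x⟯ := by
        simpa using IntermediateField.algebraMap_mem ℚ⟮x⟯ (2:ℚ)
      have h1 : (1:ℂ) ∈ ℚ⟮x⟯ := one_mem _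
      rw [SetLike.mem_coe, hgen]
      exact mul_mem (add_mem h3 (mul_mem h2 hxm)) (inv_mem (sub_mem h1 hxm))
    · rw [adjoin_le_iff, Set.singleton_subset_iff]
      exact ha
  -- upper bound on the degree
  have hmdvd : minpoly ℚ x ∣ QP12 := minpoly.dvd ℚ x haev
  have hmdeg_le : (minpoly ℚ x).natDegree ≤ 10 :=
    hQdeg ▸ natDegree_le_of_dvd hmdvd hQmonic.ne_zero
  haveI : FiniteDimensional ℚ ℚ⟮x⟯ := adjoin.finiteDimensional hxint
  haveI hfdK : FiniteDimensional ℚ K := by rw [hKeq]; infer_instance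
  have hfr : finrank ℚ ℚ⟮x⟯ = (minpoly ℚ x).natDegree := adjoin.finrank hxint
  -- lower bound via the cyclotomic field
  have hζQint : IsIntegral ℚ ζ := (hζ.isIntegral (by norm_num)).tower_top
  have hcyclo : minpoly ℚ ζ = cyclotomic 50 ℚ :=
    (hζ.minpoly_eq_cyclotomic_of_irreducible (cyclotomic.irreducible_rat (by norm_num))).symm
  have hLdeg : finrank ℚ ℚ⟮ζ⟯ = 20 := by
    rw [adjoin.finrank hζQint, hcyclo, natDegree_cyclotomic]
    decide
  have hζKint : IsIntegral K ζ := hζQint.tower_top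
  haveI : FiniteDimensional K K⟮ζ⟯ := adjoin.finiteDimensional hζKint
  haveI : FiniteDimensional ℚ K⟮ζ⟯ := FiniteDimensional.trans ℚ K K⟮ζ⟯
  have hemem : ζ + ζ⁻¹ ∈ K := subset_adjoin ℚ {ζ + ζ⁻¹} rfl
  have hquad : (minpoly K ζ).natDegree ≤ 2 := by
    have hP : aeval ζ (X ^ 2 - C (⟨ζ + ζ⁻¹, hemem⟩ : K) * X + 1 : Polynomial K) = 0 := by
      simp only [map_add, map_sub, map_mul, map_pow, aeval_X, aeval_C, map_one]
      have hcoe : (algebraMap K ℂ) (⟨ζ + ζ⁻¹, hemem⟩ : K) = ζ + ζ⁻¹ := rfl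
      rw [hcoe]
      linear_combination - hinv
    have hPm : (X ^ 2 - C (⟨ζ + ζ⁻¹, hemem⟩ : K) * X + 1 : Polynomial K).Monic := by
      monicity!
    have hle2 := natDegree_le_of_dvd (minpoly.dvd K ζ hP) hPm.ne_zero
    refine hle2.trans ?_
    compute_degree!
  have hsub : ℚ⟮ζ⟯ ≤ (K⟮ζ⟯).restrictScalars ℚ := by
    rw [adjoin_le_iff, Set.singleton_subset_iff]
    exact subset_adjoin K {ζ} rfl
  haveI : FiniteDimensional ℚ ((K⟮ζ⟯).restrictScalars ℚ) := FiniteDimensional.trans ℚ K K⟮ζ⟯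
  have h20 : (20:ℕ) ≤ finrank ℚ K * 2 := by
    calc (20:ℕ) = finrank ℚ ℚ⟮ζ⟯ := hLdeg.symm
    _ ≤ finrank ℚ ((K⟮ζ⟯).restrictScalars ℚ) := by
        have h' : Subalgebra.toSubmodule (ℚ⟮ζ⟯).toSubalgebra ≤
            Subalgebra.toSubmodule ((K⟮ζ⟯).restrictScalars ℚ).toSubalgebra :=
          fun z hz => hsub hz
        haveI : Module.Finite ℚ
            ↥(Subalgebra.toSubmodule ((K⟮ζ⟯).restrictScalars ℚ).toSubalgebra) :=
          (inferInstance : FiniteDimensional ℚ ((K⟮ζ⟯).restrictScalars ℚ))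
        exact Submodule.finrank_mono h'
    _ = finrank ℚ K * finrank K K⟮ζ⟯ := (finrank_mul_finrank ℚ K K⟮ζ⟯).symm
    _ ≤ finrank ℚ K * 2 := by
        have hr2 : finrank K K⟮ζ⟯ ≤ 2 := by rw [adjoin.finrank hζKint]; exact hquad
        exact Nat.mul_le_mul_left _ hr2
  have hle : finrank ℚ K ≤ 10 := by rw [hKeq, hfr]; exact hmdeg_le
  have hK10 : finrank ℚ K = 10 := by omega
  -- the minimal polynomial of x is QP12
  have hmdeg10 : (minpoly ℚ x).natDegree = 10 := by
    rw [← hfr, ← hKeq]; exact hK10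
  have hminQ : minpoly ℚ x = QP12 :=
    (Polynomial.eq_of_monic_of_dvd_of_natDegree_le (minpoly.monic hxint) hQmonic hmdvd
      (by rw [hQdeg, hmdeg10])).symm
  constructor
  · -- integrality over ℤ
    refine ⟨ZP12, by unfold ZP12; monicity!, ?_⟩
    have hZQ : ZP12.map (algebraMap ℤ ℚ) = QP12 := by
      unfold ZP12 QP12
      simp only [Polynomial.map_add, Polynomial.map_mul, Polynomial.map_pow,
        Polynomial.map_X, Polynomial.map_C]
      norm_num
    show (Polynomial.aeval x) ZP12 = 0
    rw [show (Polynomial.aeval x) ZP12 = (Polynomial.aeval x) (ZP12.map (algebraMap ℤ ℚ)) from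
      (aeval_map_algebraMap ℚ x ZP12).symm, hZQ]
    exact haev
  · -- the norm
    set a : K := ⟨x, ha⟩ with hadef
    have hmap : algebraMap K ℂ a = x := rfl
    have haint : IsIntegral ℚ a := by
      rw [← isIntegral_algebraMap_iff (algebraMap K ℂ).injective, hmap]; exact hxint
    have hma : minpoly ℚ a = minpoly ℚ x := by
      rw [← hmap, minpoly.algebraMap_eq (algebraMap K ℂ).injective]
    have hmadeg : (minpoly ℚ a).natDegree = 10 := by rw [hma]; exact hmdeg10
    have h1 : finrank (↥ℚ⟮a⟯) (↥K) = 1 := by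
      have ht := Module.finrank_mul_finrank ℚ (↥ℚ⟮a⟯) (↥K)
      have h2 : finrank ℚ (↥ℚ⟮a⟯) = 10 := by rw [adjoin.finrank haint, hmadeg]
      rw [h2, hK10] at ht
      omega
    rw [Algebra.norm_eq_norm_adjoin ℚ a, h1, pow_one]
    rw [← IntermediateField.adjoin.powerBasis_gen haint,
      Algebra.PowerBasis.norm_gen_eq_coeff_zero_minpoly]
    rw [IntermediateField.adjoin.powerBasis_gen, minpoly_gen, hma, hminQ]
    rw [IntermediateField.adjoin.powerBasis_dim, hma, hminQ]
    have hdeg : (QP12).natDegree = 10 := by unfold QP12; compute_degree!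
    have hc : (QP12).coeff 0 = 3001 := by unfold QP12; simp [coeff_one]
    rw [hdeg, hc]
    norm_num
end

section
/- There is no integer τ ≥ 3 such that both 3(τ − 2) and 3(τ + 2) are perfect squares, and no integer τ ≥ 3 such that both 6(τ − 2) and 6(τ + 2) are perfect squares. -/
/-- There is no integer τ ≥ 3 with both 3(τ − 2) and 3(τ + 2) perfect squares,
and none with both 6(τ − 2) and 6(τ + 2) perfect squares. -/
theorem stmt_16 :
    (¬ ∃ τ : ℤ, 3 ≤ τ ∧ (∃ a : ℤ, 3 * (τ - 2) = a ^ 2) ∧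
      (∃ b : ℤ, 3 * (τ + 2) = b ^ 2)) ∧
    (¬ ∃ τ : ℤ, 3 ≤ τ ∧ (∃ a : ℤ, 6 * (τ - 2) = a ^ 2) ∧
      (∃ b : ℤ, 6 * (τ + 2) = b ^ 2)) := by
  constructor
  · rintro ⟨τ, hτ, ⟨a, ha⟩, ⟨b, hb⟩⟩
    have ha2 : (3:ℤ) ∣ a ^ 2 := ⟨τ - 2, by linarith⟩
    have h3a : (3:ℤ) ∣ a := Int.prime_three.dvd_of_dvd_pow ha2
    have hb2 : (3:ℤ) ∣ b ^ 2 := ⟨τ + 2, by linarith⟩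
    have h3b : (3:ℤ) ∣ b := Int.prime_three.dvd_of_dvd_pow hb2
    obtain ⟨k, rfl⟩ := h3a
    obtain ⟨m, rfl⟩ := h3b
    have h : (3:ℤ) ∣ 4 := ⟨m ^ 2 - k ^ 2, by ring_nf; ring_nf at ha hb; linarith⟩
    norm_num at h
  · rintro ⟨τ, hτ, ⟨a, ha⟩, ⟨b, hb⟩⟩
    have ha2 : (3:ℤ) ∣ a ^ 2 := ⟨2 * (τ - 2), by linarith⟩
    have h3a : (3:ℤ) ∣ a := Int.prime_three.dvd_of_dvd_pow ha2
    have hb2 : (3:ℤ) ∣ b ^ 2 := ⟨2 * (τ + 2), by linarith⟩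
    have h3b : (3:ℤ) ∣ b := Int.prime_three.dvd_of_dvd_pow hb2
    obtain ⟨k, rfl⟩ := h3a
    obtain ⟨m, rfl⟩ := h3b
    have h : (3:ℤ) ∣ 8 := ⟨m ^ 2 - k ^ 2, by ring_nf; ring_nf at ha hb; linarith⟩
    norm_num at h
end
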